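/- (Jensen-type inequality) Let E ⊂ ℝ^N be a measurable set with 0 < |E| < ∞ and let u ∈ L^1(E) satisfy (1/|E|)∫_E u dx = 1. Then for all real r ≥ 1 and λ ≥ 0, the function x ↦ (u(x)^⟨r⟩ − λ^r)^⟨1/r⟩ is integrable on E and (1/|E|)∫_E (u^⟨r⟩ − λ^r)^⟨1/r⟩ dx ≥ 1 − 2^{(r−1)/r}·λ. -/

import Mathlib

open MeasureTheory Metric Set Filter Topology

noncomputable section

/-- Signed power `a^⟨q⟩ = |a|^(q-1) · a`. -/
def spow (a q : ℝ) : ℝ := |a| ^ (q - 1) * a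

/-- Euclidean space `ℝ^N`. -/
abbrev Rn (N : ℕ) := EuclideanSpace ℝ (Fin N)

/-- The integrand of the Gagliardo seminorm. -/
def energyIntegrand (N : ℕ) (p s : ℝ) (φ : Rn N → ℝ) (z : Rn N × Rn N) : ℝ :=
  |φ z.1 - φ z.2| ^ p / ‖z.1 - z.2‖ ^ ((N : ℝ) + p * s)

/-- The integrand of the nonlinear pairing `(u, φ)`. -/
def gker (N : ℕ) (p s : ℝ) (u φ : Rn N → ℝ) (z : Rn N × Rn N) : ℝ :=
  spow (u z.1 - u z.2) (p - 1) * (φ z.1 - φ z.2) / ‖z.1 - z.2‖ ^ ((N : ℝ) + p * s)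

/-- `φ ∈ W^{s,p}_0(Ω)`. -/
def memW0 (N : ℕ) (p s : ℝ) (Ω : Set (Rn N)) (φ : Rn N → ℝ) : Prop :=
  MemLp φ (ENNReal.ofReal p) volume ∧
  Integrable (energyIntegrand N p s φ) volume ∧
  ∀ᵐ x, x ∉ Ω → φ x = 0

/-- `u ∈ W̃^{s,p}(Ω)` (for bounded `Ω`). -/
def memWtilde (N : ℕ) (p s : ℝ) (Ω : Set (Rn N)) (u : Rn N → ℝ) : Prop :=
  AEStronglyMeasurable u volume ∧
  (∀ K : Set (Rn N), IsCompact K → IntegrableOn (fun x => |u x| ^ p) K) ∧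
  (∃ U : Set (Rn N), IsOpen U ∧ closure Ω ⊆ U ∧
     IntegrableOn (fun x => |u x| ^ p) U ∧
     IntegrableOn (energyIntegrand N p s u) (U ×ˢ U)) ∧
  Integrable (fun x => |u x| ^ (p - 1) / (1 + ‖x‖) ^ ((N : ℝ) + p * s))

/-- `u ∈ W̃^{s,p}_loc(Ω)`. -/
def memWtildeLoc (N : ℕ) (p s : ℝ) (Ω : Set (Rn N)) (u : Rn N → ℝ) : Prop :=
  ∀ Ω' : Set (Rn N), IsOpen Ω' → Bornology.IsBounded Ω' → Ω' ⊆ Ω → memWtilde N p s Ω' u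

/-- `u` is a weak solution of `(-Δ)^s_p u = f` in `Ω`. -/
def isWeakSol (N : ℕ) (p s : ℝ) (Ω : Set (Rn N)) (u f : Rn N → ℝ) : Prop :=
  ∀ Ω' : Set (Rn N), IsOpen Ω' → Bornology.IsBounded Ω' → Ω' ⊆ Ω →
    ∀ φ : Rn N → ℝ, memW0 N p s Ω' φ →
      (∫ z : Rn N × Rn N, gker N p s u φ z) = ∫ x in Ω', f x * φ x

/-- `(-Δ)^s_p u ≤ g` weakly in `Ω`. -/
def weakLE (N : ℕ) (p s : ℝ) (Ω : Set (Rn N)) (u g : Rn N → ℝ) : Prop :=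
  ∀ φ : Rn N → ℝ, memW0 N p s Ω φ → (∀ᵐ x, 0 ≤ φ x) →
    (∫ z : Rn N × Rn N, gker N p s u φ z) ≤ ∫ x in Ω, g x * φ x

/-- `(-Δ)^s_p u ≥ g` weakly in `Ω`. -/
def weakGE (N : ℕ) (p s : ℝ) (Ω : Set (Rn N)) (u g : Rn N → ℝ) : Prop :=
  ∀ φ : Rn N → ℝ, memW0 N p s Ω φ → (∀ᵐ x, 0 ≤ φ x) →
    (∫ x in Ω, g x * φ x) ≤ ∫ z : Rn N × Rn N, gker N p s u φ z

/-- The nonlocal tail. -/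
def tailF (N : ℕ) (p s : ℝ) (v : Rn N → ℝ) (x₀ : Rn N) (R : ℝ) : ℝ :=
  (R ^ (p * s) * ∫ y in {y : Rn N | R ≤ dist y x₀}, |v y| ^ (p - 1) / ‖x₀ - y‖ ^ ((N : ℝ) + p * s)) ^ (1 / (p - 1))


/-!
The integrand dominates `u - 2^{(r-1)/r} λ` pointwise, so the inequality follows by integrating
over `E` and dividing by `|E|`. For the pointwise bound `a - 2^{(r-1)/r} λ ≤ (a^⟨r⟩ - λ^r)^⟨1/r⟩`,
the cases `a ≤ 0` and `a ≥ λ` only need the sub/superadditivity of `t ↦ t^{1/r}` and `t ↦ t^r`,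
which even give `a - λ` as lower bound; the factor `2^{(r-1)/r}` comes from the power mean
inequality in the remaining case `0 ≤ a ≤ λ`. Integrability follows from `|a| + λ` bounding the
integrand.
-/

open scoped NNReal

lemma spow_neg (a q : ℝ) : spow (-a) q = -spow a q := by
  rw [spow, spow, abs_neg, mul_neg]

lemma spow_of_nonneg {a : ℝ} (ha : 0 ≤ a) {q : ℝ} (hq : q ≠ 0) : spow a q = a ^ q := by
  rw [spow, abs_of_nonneg ha]
  rcases ha.eq_or_lt with rfl | ha
  · rw [mul_zero, Real.zero_rpow hq]
  · rw [Real.rpow_sub_one ha.ne', div_mul_cancel₀ _ ha.ne']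

lemma spow_of_nonpos {a : ℝ} (ha : a ≤ 0) {q : ℝ} (hq : q ≠ 0) : spow a q = -(-a) ^ q := by
  rw [← spow_of_nonneg (neg_nonneg.2 ha) hq, spow_neg, neg_neg]

lemma abs_spow (a : ℝ) {q : ℝ} (hq : q ≠ 0) : |spow a q| = |a| ^ q := by
  rw [spow, abs_mul, abs_of_nonneg (Real.rpow_nonneg (abs_nonneg a) _),
    ← spow_of_nonneg (abs_nonneg a) hq, spow, abs_abs]

lemma measurable_spow (q : ℝ) : Measurable fun a : ℝ => spow a q :=
  (measurable_id.abs.pow_const _).mul measurable_id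

lemma Real.rpow_add_le_mul_rpow_add_rpow {a b p : ℝ} (ha : 0 ≤ a) (hb : 0 ≤ b) (hp : 1 ≤ p) :
    (a + b) ^ p ≤ 2 ^ (p - 1) * (a ^ p + b ^ p) := by
  lift a to ℝ≥0 using ha
  lift b to ℝ≥0 using hb
  exact_mod_cast NNReal.rpow_add_le_mul_rpow_add_rpow a b hp

section ShiftedSignedPower

variable {r lam : ℝ}

lemma abs_spow_spow_sub_rpow_le (hr : 1 ≤ r) (hl : 0 ≤ lam) (a : ℝ) :
    |spow (spow a r - lam ^ r) (1 / r)| ≤ |a| + lam := by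
  have hr0 : r ≠ 0 := by positivity
  rw [abs_spow _ (by positivity)]
  calc |spow a r - lam ^ r| ^ (1 / r) ≤ (|a| ^ r + lam ^ r) ^ (1 / r) := by
        gcongr
        calc |spow a r - lam ^ r| ≤ |spow a r| + |lam ^ r| := abs_sub _ _
          _ = |a| ^ r + lam ^ r := by
            rw [abs_spow _ hr0, abs_of_nonneg (Real.rpow_nonneg hl r)]
    _ ≤ |a| + lam := Real.rpow_add_rpow_le_add (abs_nonneg a) hl hr

lemma sub_le_spow_spow_sub_rpow_of_nonpos (hr : 1 ≤ r) (hl : 0 ≤ lam) {a : ℝ} (ha : a ≤ 0) :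
    a - lam ≤ spow (spow a r - lam ^ r) (1 / r) := by
  have hna : 0 ≤ -a := neg_nonneg.2 ha
  have hsum : ((-a) ^ r + lam ^ r) ^ (1 / r) ≤ -a + lam := Real.rpow_add_rpow_le_add hna hl hr
  rw [spow_of_nonpos ha (by positivity), ← neg_add', spow_neg,
    spow_of_nonneg (by positivity) (by positivity)]
  linarith

lemma sub_le_spow_spow_sub_rpow_of_le (hr : 1 ≤ r) (hl : 0 ≤ lam) {a : ℝ} (ha : lam ≤ a) :
    a - lam ≤ spow (spow a r - lam ^ r) (1 / r) := by
  have hr0 : 0 < r := by positivity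
  have hsuper : (a - lam) ^ r + lam ^ r ≤ a ^ r := by
    simpa using Real.add_rpow_le_rpow_add (sub_nonneg.2 ha) hl hr
  have hdiff : 0 ≤ a ^ r - lam ^ r := by linarith [Real.rpow_nonneg (sub_nonneg.2 ha) r]
  rw [spow_of_nonneg (hl.trans ha) hr0.ne', spow_of_nonneg hdiff (by positivity), one_div,
    Real.le_rpow_inv_iff_of_pos (sub_nonneg.2 ha) hdiff hr0]
  linarith

/-- With `y = (λ^r - a^r)^{1/r}`, the power mean inequality gives
`(a + y)^r ≤ 2^{r-1} (a^r + y^r) = (2^{(r-1)/r} λ)^r`. -/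
lemma sub_le_spow_spow_sub_rpow_of_nonneg_of_le (hr : 1 ≤ r) {a : ℝ} (ha : 0 ≤ a)
    (hal : a ≤ lam) :
    a - 2 ^ ((r - 1) / r) * lam ≤ spow (spow a r - lam ^ r) (1 / r) := by
  have hr0 : 0 < r := by positivity
  have hl : 0 ≤ lam := ha.trans hal
  have hy0 : 0 ≤ lam ^ r - a ^ r := sub_nonneg.2 (by gcongr)
  set y := (lam ^ r - a ^ r) ^ r⁻¹
  have hyr : y ^ r = lam ^ r - a ^ r := Real.rpow_inv_rpow hy0 hr0.ne'
  have hpow : (a + y) ^ r ≤ (2 ^ ((r - 1) / r) * lam) ^ r := by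
    calc (a + y) ^ r ≤ 2 ^ (r - 1) * (a ^ r + y ^ r) :=
          Real.rpow_add_le_mul_rpow_add_rpow ha (by positivity) hr
      _ = (2 ^ ((r - 1) / r) * lam) ^ r := by
          rw [hyr, Real.mul_rpow (by positivity) hl, ← Real.rpow_mul zero_le_two,
            div_mul_cancel₀ _ hr0.ne']
          ring
  have hle : a + y ≤ 2 ^ ((r - 1) / r) * lam :=
    (Real.rpow_le_rpow_iff (by positivity) (by positivity) hr0).1 hpow
  rw [spow_of_nonneg ha hr0.ne', spow_of_nonpos (by linarith) (by positivity), neg_sub, one_div]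
  linarith

lemma sub_le_spow_spow_sub_rpow (hr : 1 ≤ r) (hl : 0 ≤ lam) (a : ℝ) :
    a - 2 ^ ((r - 1) / r) * lam ≤ spow (spow a r - lam ^ r) (1 / r) := by
  have hlc : lam ≤ 2 ^ ((r - 1) / r) * lam :=
    le_mul_of_one_le_left hl (Real.one_le_rpow one_le_two (by bound))
  rcases le_total a 0 with ha | ha
  · linarith [sub_le_spow_spow_sub_rpow_of_nonpos hr hl ha]
  rcases le_total a lam with hal | hal
  · exact sub_le_spow_spow_sub_rpow_of_nonneg_of_le hr ha hal
  · linarith [sub_le_spow_spow_sub_rpow_of_le hr hl hal]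

variable {α : Type*} [MeasurableSpace α] {μ : Measure α} [IsFiniteMeasure μ] {u : α → ℝ}

lemma MeasureTheory.Integrable.spow_spow_sub_rpow (hu : Integrable u μ) (hr : 1 ≤ r)
    (hl : 0 ≤ lam) :
    Integrable (fun x => spow (spow (u x) r - lam ^ r) (1 / r)) μ := by
  have hmeas : Measurable fun a : ℝ => spow (spow a r - lam ^ r) (1 / r) :=
    (measurable_spow _).comp ((measurable_spow r).sub_const _)
  refine (hu.abs.add (integrable_const lam)).mono'
    (hmeas.comp_aemeasurable hu.aemeasurable).aestronglyMeasurable (ae_of_all _ fun x => ?_)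
  exact abs_spow_spow_sub_rpow_le hr hl (u x)

lemma integral_sub_le_integral_spow_spow_sub_rpow (hu : Integrable u μ) (hr : 1 ≤ r)
    (hl : 0 ≤ lam) :
    ∫ x, u x ∂μ - μ.real univ * (2 ^ ((r - 1) / r) * lam) ≤
      ∫ x, spow (spow (u x) r - lam ^ r) (1 / r) ∂μ := by
  have h : ∫ x, u x - 2 ^ ((r - 1) / r) * lam ∂μ ≤
      ∫ x, spow (spow (u x) r - lam ^ r) (1 / r) ∂μ :=
    integral_mono (hu.sub (integrable_const _)) (hu.spow_spow_sub_rpow hr hl)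
      fun x => sub_le_spow_spow_sub_rpow hr hl (u x)
  rwa [integral_sub hu (integrable_const _), integral_const, smul_eq_mul] at h

end ShiftedSignedPower

theorem statement15_general (N : ℕ) (E : Set (Rn N))
    (hE0 : 0 < volume E) (hEfin : volume E < ⊤)
    (u : Rn N → ℝ) (hu : IntegrableOn u E)
    (havg : (volume E).toReal⁻¹ * ∫ x in E, u x = 1) :
    ∀ r : ℝ, 1 ≤ r → ∀ lam : ℝ, 0 ≤ lam →
      IntegrableOn (fun x => spow (spow (u x) r - lam ^ r) (1 / r)) E ∧
      1 - 2 ^ ((r - 1) / r) * lam ≤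
        (volume E).toReal⁻¹ * ∫ x in E, spow (spow (u x) r - lam ^ r) (1 / r) := by
  intro r hr lam hl
  have : IsFiniteMeasure (volume.restrict E) := isFiniteMeasure_restrict.2 hEfin.ne
  have hm0 : (volume E).toReal ≠ 0 := (ENNReal.toReal_pos hE0.ne' hEfin.ne).ne'
  refine ⟨hu.spow_spow_sub_rpow hr hl, ?_⟩
  have h := integral_sub_le_integral_spow_spow_sub_rpow hu hr hl
  rw [measureReal_restrict_apply_univ, measureReal_def] at h
  calc 1 - 2 ^ ((r - 1) / r) * lam
      = (volume E).toReal⁻¹ *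
          ((∫ x in E, u x) - (volume E).toReal * (2 ^ ((r - 1) / r) * lam)) := by
        rw [mul_sub, havg, inv_mul_cancel_left₀ hm0]
    _ ≤ _ := mul_le_mul_of_nonneg_left h (by positivity)

/-- Lemma 5.1, Jensen-type inequality. -/
theorem statement15 (N : ℕ) (hN : 1 ≤ N) (E : Set (Rn N)) (hE : MeasurableSet E)
    (hE0 : 0 < volume E) (hEfin : volume E < ⊤)
    (u : Rn N → ℝ) (hu : IntegrableOn u E)
    (havg : (volume E).toReal⁻¹ * ∫ x in E, u x = 1) :
    ∀ r : ℝ, 1 ≤ r → ∀ lam : ℝ, 0 ≤ lam →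
      IntegrableOn (fun x => spow (spow (u x) r - lam ^ r) (1 / r)) E ∧
      1 - 2 ^ ((r - 1) / r) * lam ≤
        (volume E).toReal⁻¹ * ∫ x in E, spow (spow (u x) r - lam ^ r) (1 / r) :=
  statement15_general N E hE0 hEfin u hu havg
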